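/- arXiv:1205.5876 — 5 statements merged into one kernel-verified Lean document; each statement's English description precedes it below -/
import Mathlib

section
/- Let m, n, s, t be positive integers with m + n = s + t, and let a_1, a_2, x, y be real numbers with 0 < x ≤ a_1 < a_2 ≤ y. If s·x + t·y = m·a_1 + n·a_2 and s·x² + t·y² = m·a_1² + n·a_2², then m = s, n = t, x = a_1, and y = a_2. -/
/-! Subtracting `(a₁ + a₂)` times the first moment identity and `a₁ a₂` times the total mass
identity from the second one gives `s (x - a₁)(x - a₂) + t (y - a₁)(y - a₂) = 0`, the quadratic
`(z - a₁)(z - a₂)` being the one that vanishes on the support of the right-hand sides. Since `x`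
and `y` lie outside `(a₁, a₂)`, both summands are nonnegative, hence zero, which forces
`x = a₁` and `y = a₂`; the first moment identity then reads `(s - m)(a₁ - a₂) = 0`. -/

section TwoPoint

variable {K : Type*} [Field K] [LinearOrder K] [IsStrictOrderedRing K]

lemma sub_mul_sub_nonneg_of_le_left {z a b : K} (hz : z ≤ a) (hab : a ≤ b) :
    0 ≤ (z - a) * (z - b) :=
  mul_nonneg_of_nonpos_of_nonpos (sub_nonpos.2 hz) (sub_nonpos.2 (hz.trans hab))

lemma sub_mul_sub_nonneg_of_le_right {z a b : K} (hab : a ≤ b) (hz : b ≤ z) :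
    0 ≤ (z - a) * (z - b) :=
  mul_nonneg (sub_nonneg.2 (hab.trans hz)) (sub_nonneg.2 hz)

lemma weighted_sub_mul_sub_eq_zero {m n s t a₁ a₂ x y : K} (h0 : m + n = s + t)
    (h1 : s * x + t * y = m * a₁ + n * a₂)
    (h2 : s * x ^ 2 + t * y ^ 2 = m * a₁ ^ 2 + n * a₂ ^ 2) :
    s * ((x - a₁) * (x - a₂)) + t * ((y - a₁) * (y - a₂)) = 0 := by
  linear_combination h2 - (a₁ + a₂) * h1 - a₁ * a₂ * h0

lemma eq_and_eq_of_two_point_moments_eq {m n s t a₁ a₂ x y : K} (hs : 0 < s) (ht : 0 < t)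
    (h0 : m + n = s + t) (hxa : x ≤ a₁) (ha : a₁ < a₂) (hay : a₂ ≤ y)
    (h1 : s * x + t * y = m * a₁ + n * a₂)
    (h2 : s * x ^ 2 + t * y ^ 2 = m * a₁ ^ 2 + n * a₂ ^ 2) :
    x = a₁ ∧ y = a₂ ∧ m = s := by
  have hx₀ := mul_nonneg hs.le (sub_mul_sub_nonneg_of_le_left hxa ha.le)
  have hy₀ := mul_nonneg ht.le (sub_mul_sub_nonneg_of_le_right ha.le hay)
  obtain ⟨hx_zero, hy_zero⟩ :=
    (add_eq_zero_iff_of_nonneg hx₀ hy₀).1 (weighted_sub_mul_sub_eq_zero h0 h1 h2)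
  have hxa₁ : x = a₁ := by
    have := (mul_eq_zero.1 ((mul_eq_zero.1 hx_zero).resolve_left hs.ne')).resolve_right
      (sub_ne_zero.2 (hxa.trans_lt ha).ne)
    exact sub_eq_zero.1 this
  have hya₂ : y = a₂ := by
    have := (mul_eq_zero.1 ((mul_eq_zero.1 hy_zero).resolve_left ht.ne')).resolve_left
      (sub_ne_zero.2 (ha.trans_le hay).ne')
    exact sub_eq_zero.1 this
  subst hxa₁ hya₂
  have hsm : (s - m) * (x - y) = 0 := by linear_combination h1 + y * h0
  have := (mul_eq_zero.1 hsm).resolve_right (sub_ne_zero.2 ha.ne)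
  exact ⟨rfl, rfl, (sub_eq_zero.1 this).symm⟩

end TwoPoint

theorem stmt_2_general (m n s t : ℕ) (hs : 0 < s) (ht : 0 < t)
    (hmn : m + n = s + t) (a₁ a₂ x y : ℝ)
    (hxa : x ≤ a₁) (ha : a₁ < a₂) (hay : a₂ ≤ y)
    (h1 : (s : ℝ) * x + (t : ℝ) * y = (m : ℝ) * a₁ + (n : ℝ) * a₂)
    (h2 : (s : ℝ) * x ^ 2 + (t : ℝ) * y ^ 2 = (m : ℝ) * a₁ ^ 2 + (n : ℝ) * a₂ ^ 2) :
    m = s ∧ n = t ∧ x = a₁ ∧ y = a₂ := by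
  obtain ⟨hx, hy, hms⟩ := eq_and_eq_of_two_point_moments_eq (Nat.cast_pos.2 hs)
    (Nat.cast_pos.2 ht) (by exact_mod_cast hmn) hxa ha hay h1 h2
  have hms : m = s := by exact_mod_cast hms
  exact ⟨hms, by omega, hx, hy⟩

theorem stmt_2 (m n s t : ℕ) (hm : 0 < m) (hn : 0 < n) (hs : 0 < s) (ht : 0 < t)
    (hmn : m + n = s + t) (a₁ a₂ x y : ℝ)
    (hx : 0 < x) (hxa : x ≤ a₁) (ha : a₁ < a₂) (hay : a₂ ≤ y)
    (h1 : (s : ℝ) * x + (t : ℝ) * y = (m : ℝ) * a₁ + (n : ℝ) * a₂)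
    (h2 : (s : ℝ) * x ^ 2 + (t : ℝ) * y ^ 2 = (m : ℝ) * a₁ ^ 2 + (n : ℝ) * a₂ ^ 2) :
    m = s ∧ n = t ∧ x = a₁ ∧ y = a₂ :=
  stmt_2_general m n s t hs ht hmn a₁ a₂ x y hxa ha hay h1 h2
end

section
/- (Bennett) Suppose α_1, α_2, δ_1, δ_2 ≥ 0 are real numbers, d_1 < a_1 < a_2 < d_2 are real numbers, α_1 + α_2 = δ_1 + δ_2, and α_1·a_1 + α_2·a_2 = δ_1·d_1 + δ_2·d_2. If φ : ℝ → ℝ is convex on the interval [d_1, d_2], then α_1·φ(a_1) + α_2·φ(a_2) ≤ δ_1·φ(d_1) + δ_2·φ(d_2). -/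
open Finset

/-! Each point `a ∈ [d₁, d₂]` is a convex combination of the endpoints, so convexity bounds
`φ a` by the chord through `(d₁, φ d₁)` and `(d₂, φ d₂)`. Averaging these chord bounds with the
weights `αᵢ`, the two moment conditions turn the coefficients of `φ d₁` and `φ d₂` into
exactly `δ₁` and `δ₂`. -/

theorem ConvexOn.sub_mul_le_of_mem_Icc {φ : ℝ → ℝ} {d₁ d₂ a : ℝ}
    (hφ : ConvexOn ℝ (Set.Icc d₁ d₂) φ) (ha : a ∈ Set.Icc d₁ d₂) :
    (d₂ - d₁) * φ a ≤ (d₂ - a) * φ d₁ + (a - d₁) * φ d₂ := by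
  have hd : d₁ ≤ d₂ := ha.1.trans ha.2
  rcases ha.1.eq_or_lt with rfl | hd₁a
  · linarith
  rcases ha.2.eq_or_lt with rfl | had₂
  · linarith
  exact hφ.secant_mono_aux1 (Set.left_mem_Icc.2 hd) (Set.right_mem_Icc.2 hd) hd₁a had₂

theorem ConvexOn.sum_mul_le_of_sum_eq_of_sum_mul_eq {ι : Type*} {φ : ℝ → ℝ} {d₁ d₂ δ₁ δ₂ : ℝ}
    (hφ : ConvexOn ℝ (Set.Icc d₁ d₂) φ) (hd : d₁ < d₂) (s : Finset ι) {α a : ι → ℝ}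
    (hα : ∀ i ∈ s, 0 ≤ α i) (ha : ∀ i ∈ s, a i ∈ Set.Icc d₁ d₂)
    (hsum : ∑ i ∈ s, α i = δ₁ + δ₂)
    (hwsum : ∑ i ∈ s, α i * a i = δ₁ * d₁ + δ₂ * d₂) :
    ∑ i ∈ s, α i * φ (a i) ≤ δ₁ * φ d₁ + δ₂ * φ d₂ := by
  refine le_of_mul_le_mul_left ?_ (sub_pos.2 hd)
  calc (d₂ - d₁) * ∑ i ∈ s, α i * φ (a i) = ∑ i ∈ s, α i * ((d₂ - d₁) * φ (a i)) := by
        rw [mul_sum]; exact sum_congr rfl fun i _ ↦ by ring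
    _ ≤ ∑ i ∈ s, α i * ((d₂ - a i) * φ d₁ + (a i - d₁) * φ d₂) :=
        sum_le_sum fun i hi ↦
          mul_le_mul_of_nonneg_left (hφ.sub_mul_le_of_mem_Icc (ha i hi)) (hα i hi)
    _ = (d₂ * ∑ i ∈ s, α i - ∑ i ∈ s, α i * a i) * φ d₁
          + (∑ i ∈ s, α i * a i - d₁ * ∑ i ∈ s, α i) * φ d₂ := by
        simp only [mul_sum, sub_mul, sum_mul, ← sum_sub_distrib, ← sum_add_distrib]
        exact sum_congr rfl fun i _ ↦ by ring
    _ = (d₂ - d₁) * (δ₁ * φ d₁ + δ₂ * φ d₂) := by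
        rw [hsum, hwsum]; ring

theorem stmt_3_general (α₁ α₂ δ₁ δ₂ a₁ a₂ d₁ d₂ : ℝ)
    (hα₁ : 0 ≤ α₁) (hα₂ : 0 ≤ α₂)
    (h1 : d₁ < a₁) (h2 : a₁ < a₂) (h3 : a₂ < d₂)
    (hsum : α₁ + α₂ = δ₁ + δ₂)
    (hwsum : α₁ * a₁ + α₂ * a₂ = δ₁ * d₁ + δ₂ * d₂)
    (φ : ℝ → ℝ) (hφ : ConvexOn ℝ (Set.Icc d₁ d₂) φ) :
    α₁ * φ a₁ + α₂ * φ a₂ ≤ δ₁ * φ d₁ + δ₂ * φ d₂ := by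
  have hα : ∀ i ∈ univ, 0 ≤ ![α₁, α₂] i := by simp [Fin.forall_fin_two, hα₁, hα₂]
  have ha : ∀ i ∈ univ, ![a₁, a₂] i ∈ Set.Icc d₁ d₂ := by
    simp only [mem_univ, forall_const, Fin.forall_fin_two, Matrix.cons_val_zero,
      Matrix.cons_val_one, Set.mem_Icc]
    exact ⟨⟨h1.le, by linarith⟩, ⟨by linarith, h3.le⟩⟩
  simpa using hφ.sum_mul_le_of_sum_eq_of_sum_mul_eq (by linarith) univ hα ha
    (by simpa using hsum) (by simpa using hwsum)

theorem stmt_3 (α₁ α₂ δ₁ δ₂ a₁ a₂ d₁ d₂ : ℝ)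
    (hα₁ : 0 ≤ α₁) (hα₂ : 0 ≤ α₂) (hδ₁ : 0 ≤ δ₁) (hδ₂ : 0 ≤ δ₂)
    (h1 : d₁ < a₁) (h2 : a₁ < a₂) (h3 : a₂ < d₂)
    (hsum : α₁ + α₂ = δ₁ + δ₂)
    (hwsum : α₁ * a₁ + α₂ * a₂ = δ₁ * d₁ + δ₂ * d₂)
    (φ : ℝ → ℝ) (hφ : ConvexOn ℝ (Set.Icc d₁ d₂) φ) :
    α₁ * φ a₁ + α₂ * φ a₂ ≤ δ₁ * φ d₁ + δ₂ * φ d₂ :=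
  stmt_3_general α₁ α₂ δ₁ δ₂ a₁ a₂ d₁ d₂ hα₁ hα₂ h1 h2 h3 hsum hwsum φ hφ
end

section
/- (Bennett) Suppose α_1, α_2, δ_1, δ_2 ≥ 0 are real numbers, a_1 < d_1 < a_2 < d_2 are real numbers, α_1 + α_2 = δ_1 + δ_2, α_1·a_1 + α_2·a_2 = δ_1·d_1 + δ_2·d_2, and α_1·a_1² + α_2·a_2² ≥ δ_1·d_1² + δ_2·d_2². If φ : ℝ → ℝ is differentiable, concave on the interval [a_1, d_2], and its derivative φ′ is convex on [a_1, d_2], then α_1·φ(a_1) + α_2·φ(a_2) ≤ δ_1·φ(d_1) + δ_2·φ(d_2). -/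
/-!
Let `q` be the quadratic interpolating `φ` at `d₁ < a₂ < d₂`. Its leading coefficient, the second
divided difference of `φ`, is nonpositive by concavity, so the moment conditions give
`α₁ q(a₁) + α₂ q(a₂) ≤ δ₁ q(d₁) + δ₂ q(d₂)`, and it remains to see `φ(a₁) ≤ q(a₁)`.
By Rolle, the derivative of `φ - q` vanishes at some `ξ₁ ∈ (d₁, a₂)` and `ξ₂ ∈ (a₂, d₂)`. It is
convex, hence nonnegative to the left of `ξ₁`, so `φ - q` increases on `[a₁, d₁]` and
`(φ - q)(a₁) ≤ (φ - q)(d₁) = 0`.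
-/

open Set

theorem apply_le_of_convexOn_deriv_of_three_eq {F : ℝ → ℝ} {a x₁ x₂ x₃ : ℝ}
    (ha : a ≤ x₁) (h₁₂ : x₁ < x₂) (h₂₃ : x₂ < x₃)
    (hF : DifferentiableOn ℝ F (Icc a x₃)) (hF' : ConvexOn ℝ (Icc a x₃) (deriv F))
    (hF₁₂ : F x₁ = F x₂) (hF₂₃ : F x₂ = F x₃) : F a ≤ F x₁ := by
  obtain ⟨ξ₁, hξ₁, hFξ₁⟩ := exists_deriv_eq_zero h₁₂
    (hF.continuousOn.mono (Icc_subset_Icc ha h₂₃.le)) hF₁₂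
  obtain ⟨ξ₂, hξ₂, hFξ₂⟩ := exists_deriv_eq_zero h₂₃
    (hF.continuousOn.mono (Icc_subset_Icc (ha.trans h₁₂.le) le_rfl)) hF₂₃
  have hsub : Icc a x₁ ⊆ Icc a x₃ := Icc_subset_Icc_right (h₁₂.trans h₂₃).le
  have hderiv_nonneg : ∀ c ∈ interior (Icc a x₁), 0 ≤ deriv F c := by
    rw [interior_Icc]
    intro c hc
    rw [← hFξ₁]
    exact hF'.le_left_of_right_le'' ⟨hc.1.le, by linarith [hc.2]⟩
      ⟨by linarith [hc.1, hξ₂.1], hξ₂.2.le⟩ (by linarith [hc.2, hξ₁.1])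
      (hξ₁.2.trans hξ₂.1) (by rw [hFξ₁, hFξ₂])
  exact monotoneOn_of_deriv_nonneg (convex_Icc a x₁) (hF.continuousOn.mono hsub)
    (hF.mono (interior_subset.trans hsub)) hderiv_nonneg ⟨le_rfl, ha⟩ ⟨ha, le_rfl⟩ ha

theorem weighted_sum_quadratic_le_of_moments {q : ℝ → ℝ} {c₂ α₁ α₂ δ₁ δ₂ a₁ a₂ d₁ d₂ : ℝ}
    (hq : ∃ c₀ c₁, ∀ x, q x = c₀ + c₁ * x + c₂ * x ^ 2) (hc₂ : c₂ ≤ 0)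
    (hsum : α₁ + α₂ = δ₁ + δ₂)
    (hwsum : α₁ * a₁ + α₂ * a₂ = δ₁ * d₁ + δ₂ * d₂)
    (hsq : α₁ * a₁ ^ 2 + α₂ * a₂ ^ 2 ≥ δ₁ * d₁ ^ 2 + δ₂ * d₂ ^ 2) :
    α₁ * q a₁ + α₂ * q a₂ ≤ δ₁ * q d₁ + δ₂ * q d₂ := by
  obtain ⟨c₀, c₁, hq⟩ := hq
  have hgap : δ₁ * q d₁ + δ₂ * q d₂ - (α₁ * q a₁ + α₂ * q a₂)
      = c₂ * (δ₁ * d₁ ^ 2 + δ₂ * d₂ ^ 2 - (α₁ * a₁ ^ 2 + α₂ * a₂ ^ 2)) := by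
    simp only [hq]
    linear_combination (-c₀) * hsum - c₁ * hwsum
  nlinarith [mul_nonneg_of_nonpos_of_nonpos hc₂ (sub_nonpos.2 hsq)]

noncomputable def secondSlope (f : ℝ → ℝ) (x₀ x₁ x₂ : ℝ) : ℝ :=
  (slope f x₁ x₂ - slope f x₀ x₁) / (x₂ - x₀)

theorem ConcaveOn.secondSlope_nonpos {s : Set ℝ} {f : ℝ → ℝ} (hf : ConcaveOn ℝ s f)
    {x₀ x₁ x₂ : ℝ} (h₀ : x₀ ∈ s) (h₂ : x₂ ∈ s) (h₀₁ : x₀ < x₁) (h₁₂ : x₁ < x₂) :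
    secondSlope f x₀ x₁ x₂ ≤ 0 := by
  rw [secondSlope, slope_def_field, slope_def_field]
  exact div_nonpos_of_nonpos_of_nonneg (sub_nonpos.2 (hf.slope_anti_adjacent h₀ h₂ h₀₁ h₁₂))
    (by linarith)

noncomputable def newtonQuadratic (f : ℝ → ℝ) (x₀ x₁ x₂ x : ℝ) : ℝ :=
  f x₀ + slope f x₀ x₁ * (x - x₀) + secondSlope f x₀ x₁ x₂ * ((x - x₀) * (x - x₁))

section NewtonQuadratic

variable {f : ℝ → ℝ} {x₀ x₁ x₂ : ℝ}

theorem newtonQuadratic_left : newtonQuadratic f x₀ x₁ x₂ x₀ = f x₀ := by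
  simp [newtonQuadratic]

theorem newtonQuadratic_mid (h₀₁ : x₀ ≠ x₁) : newtonQuadratic f x₀ x₁ x₂ x₁ = f x₁ := by
  have : x₁ - x₀ ≠ 0 := sub_ne_zero.2 h₀₁.symm
  simp only [newtonQuadratic, slope_def_field]
  field_simp
  ring

theorem newtonQuadratic_right (h₀₁ : x₀ ≠ x₁) (h₀₂ : x₀ ≠ x₂) (h₁₂ : x₁ ≠ x₂) :
    newtonQuadratic f x₀ x₁ x₂ x₂ = f x₂ := by
  have : x₁ - x₀ ≠ 0 := sub_ne_zero.2 h₀₁.symm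
  have : x₂ - x₀ ≠ 0 := sub_ne_zero.2 h₀₂.symm
  have : x₂ - x₁ ≠ 0 := sub_ne_zero.2 h₁₂.symm
  simp only [newtonQuadratic, secondSlope, slope_def_field]
  field_simp
  ring

theorem exists_newtonQuadratic_eq : ∃ c₀ c₁, ∀ x,
    newtonQuadratic f x₀ x₁ x₂ x = c₀ + c₁ * x + secondSlope f x₀ x₁ x₂ * x ^ 2 :=
  ⟨f x₀ - slope f x₀ x₁ * x₀ + secondSlope f x₀ x₁ x₂ * (x₀ * x₁),
    slope f x₀ x₁ - secondSlope f x₀ x₁ x₂ * (x₀ + x₁), fun x => by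
      simp only [newtonQuadratic]
      ring⟩

theorem hasDerivAt_newtonQuadratic (x : ℝ) :
    HasDerivAt (newtonQuadratic f x₀ x₁ x₂)
      (slope f x₀ x₁ + secondSlope f x₀ x₁ x₂ * ((x - x₁) + (x - x₀))) x := by
  have h₀ := (hasDerivAt_id' x).sub_const x₀
  have h₁ := (hasDerivAt_id' x).sub_const x₁
  exact (((h₀.const_mul (slope f x₀ x₁)).const_add (f x₀)).add
    ((h₀.mul h₁).const_mul (secondSlope f x₀ x₁ x₂))).congr_deriv (by ring)

theorem differentiable_newtonQuadratic : Differentiable ℝ (newtonQuadratic f x₀ x₁ x₂) :=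
  fun x => (hasDerivAt_newtonQuadratic x).differentiableAt

theorem convexOn_deriv_sub_newtonQuadratic {s : Set ℝ}
    (hf : ∀ x ∈ s, DifferentiableAt ℝ f x) (hf' : ConvexOn ℝ s (deriv f)) :
    ConvexOn ℝ s (deriv (f - newtonQuadratic f x₀ x₁ x₂)) := by
  set A := slope f x₀ x₁
  set B := secondSlope f x₀ x₁ x₂
  have hderiv : EqOn (deriv f - fun x => A + B * ((x - x₁) + (x - x₀)))
      (deriv (f - newtonQuadratic f x₀ x₁ x₂)) s := fun x hx =>
    (((hf x hx).hasDerivAt.sub (hasDerivAt_newtonQuadratic x)).deriv).symm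
  refine (hf'.sub ⟨hf'.1, fun x _ y _ a b _ _ hab => le_of_eq ?_⟩).congr hderiv
  simp only [smul_eq_mul]
  linear_combination (A - B * (x₀ + x₁)) * hab

end NewtonQuadratic

theorem stmt_4_general (α₁ α₂ δ₁ δ₂ a₁ a₂ d₁ d₂ : ℝ)
    (hα₁ : 0 ≤ α₁)
    (h1 : a₁ < d₁) (h2 : d₁ < a₂) (h3 : a₂ < d₂)
    (hsum : α₁ + α₂ = δ₁ + δ₂)
    (hwsum : α₁ * a₁ + α₂ * a₂ = δ₁ * d₁ + δ₂ * d₂)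
    (hsq : α₁ * a₁ ^ 2 + α₂ * a₂ ^ 2 ≥ δ₁ * d₁ ^ 2 + δ₂ * d₂ ^ 2)
    (φ : ℝ → ℝ) (hdiff : Differentiable ℝ φ)
    (hconc : ConcaveOn ℝ (Set.Icc a₁ d₂) φ)
    (hconv : ConvexOn ℝ (Set.Icc a₁ d₂) (deriv φ)) :
    α₁ * φ a₁ + α₂ * φ a₂ ≤ δ₁ * φ d₁ + δ₂ * φ d₂ := by
  set q := newtonQuadratic φ d₁ a₂ d₂
  have hq₁ : q d₁ = φ d₁ := newtonQuadratic_left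
  have hq₂ : q a₂ = φ a₂ := newtonQuadratic_mid h2.ne
  have hq₃ : q d₂ = φ d₂ := newtonQuadratic_right h2.ne (h2.trans h3).ne h3.ne
  have hφq : (φ - q) a₁ ≤ (φ - q) d₁ :=
    apply_le_of_convexOn_deriv_of_three_eq h1.le h2 h3
      (hdiff.sub differentiable_newtonQuadratic).differentiableOn
      (convexOn_deriv_sub_newtonQuadratic (fun x _ => hdiff x) hconv)
      (by simp [hq₁, hq₂]) (by simp [hq₂, hq₃])
  have hB : secondSlope φ d₁ a₂ d₂ ≤ 0 :=
    hconc.secondSlope_nonpos ⟨h1.le, (h2.trans h3).le⟩ ⟨(h1.trans (h2.trans h3)).le, le_rfl⟩ h2 h3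
  have hq_le : α₁ * q a₁ + α₂ * q a₂ ≤ δ₁ * q d₁ + δ₂ * q d₂ :=
    weighted_sum_quadratic_le_of_moments exists_newtonQuadratic_eq hB hsum hwsum hsq
  rw [hq₁, hq₂, hq₃] at hq_le
  simp only [Pi.sub_apply, hq₁, sub_self] at hφq
  nlinarith [mul_le_mul_of_nonneg_left (sub_nonpos.1 hφq) hα₁]

theorem stmt_4 (α₁ α₂ δ₁ δ₂ a₁ a₂ d₁ d₂ : ℝ)
    (hα₁ : 0 ≤ α₁) (hα₂ : 0 ≤ α₂) (hδ₁ : 0 ≤ δ₁) (hδ₂ : 0 ≤ δ₂)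
    (h1 : a₁ < d₁) (h2 : d₁ < a₂) (h3 : a₂ < d₂)
    (hsum : α₁ + α₂ = δ₁ + δ₂)
    (hwsum : α₁ * a₁ + α₂ * a₂ = δ₁ * d₁ + δ₂ * d₂)
    (hsq : α₁ * a₁ ^ 2 + α₂ * a₂ ^ 2 ≥ δ₁ * d₁ ^ 2 + δ₂ * d₂ ^ 2)
    (φ : ℝ → ℝ) (hdiff : Differentiable ℝ φ)
    (hconc : ConcaveOn ℝ (Set.Icc a₁ d₂) φ)
    (hconv : ConvexOn ℝ (Set.Icc a₁ d₂) (deriv φ)) :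
    α₁ * φ a₁ + α₂ * φ a₂ ≤ δ₁ * φ d₁ + δ₂ * φ d₂ :=
  stmt_4_general α₁ α₂ δ₁ δ₂ a₁ a₂ d₁ d₂ hα₁ h1 h2 h3 hsum hwsum hsq φ hdiff hconc hconv
end

section
/- Let p > 0 be a real number, ν a real number, and λ ≥ 0, c ≥ 0 real numbers. Define y : ℝ → ℝ by y(x) = −p + ν·x^{p+1} − 2λ·x^{p+2} + c·x^{p}. Then the set {x ∈ ℝ : x > 0 and y(x) = 0} has at most two elements. -/
/-!
For `x > 0`, `y x = x ^ p * g x` with `g x = c + ν x - 2 lam x² - p x^(-p)`. Since `p > 0` and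
`lam ≥ 0`, `g` is strictly concave on `(0, ∞)`: `x ↦ x^(-p)` is strictly convex there and the
rest is a concave quadratic. A strictly concave function takes each value at most twice, because
at a point strictly between two others it exceeds the smaller of the two values.
-/

open Set

theorem Set.encard_le_two_of_forall_not_lt_lt {α : Type*} [LinearOrder α] {S : Set α}
    (h : ∀ a ∈ S, ∀ b ∈ S, ∀ c ∈ S, a < b → b < c → False) : S.encard ≤ 2 := by
  by_contra! hS
  obtain ⟨t, htS, ht⟩ := exists_subset_encard_eq (Order.add_one_le_of_lt hS)
  obtain ⟨x, y, z, hxy, hxz, hyz, rfl⟩ := encard_eq_three.1 ht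
  have hx : x ∈ S := htS (by simp)
  have hy : y ∈ S := htS (by simp)
  have hz : z ∈ S := htS (by simp)
  rcases hxy.lt_or_gt with hxy | hxy <;> rcases hxz.lt_or_gt with hxz | hxz <;>
    rcases hyz.lt_or_gt with hyz | hyz
  all_goals grind

theorem StrictConcaveOn.encard_setOf_eq_le_two {𝕜 β : Type*} [Field 𝕜] [LinearOrder 𝕜]
    [IsStrictOrderedRing 𝕜] [AddCommGroup β] [LinearOrder β] [IsOrderedAddMonoid β]
    [Module 𝕜 β] [PosSMulStrictMono 𝕜 β] {s : Set 𝕜} {f : 𝕜 → β}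
    (hf : StrictConcaveOn 𝕜 s f) (r : β) : {x ∈ s | f x = r}.encard ≤ 2 :=
  encard_le_two_of_forall_not_lt_lt fun a ha b hb c hc hab hbc => by
    have := hf.lt_on_openSegment ha.1 hc.1 (hab.trans hbc).ne
      (by rw [openSegment_eq_Ioo (hab.trans hbc)]; exact ⟨hab, hbc⟩)
    rw [ha.2, hb.2, hc.2, min_self] at this
    exact this.false

theorem StrictConvexOn.const_mul {E : Type*} [AddCommMonoid E] [Module ℝ E] {s : Set E}
    {f : E → ℝ} {c : ℝ} (hc : 0 < c) (hf : StrictConvexOn ℝ s f) :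
    StrictConvexOn ℝ s fun x => c * f x :=
  ⟨hf.1, fun x hx y hy hxy a b ha hb hab => by
    have := mul_lt_mul_of_pos_left (hf.2 hx hy hxy ha hb hab) hc
    simp only [smul_eq_mul] at this ⊢
    linarith⟩

theorem strictConvexOn_rpow_of_neg {q : ℝ} (hq : q < 0) :
    StrictConvexOn ℝ (Ioi 0) fun x : ℝ => x ^ q := by
  refine StrictMonoOn.strictConvexOn_of_deriv (convex_Ioi 0)
    (fun x hx => (Real.continuousAt_rpow_const x q (Or.inl (ne_of_gt hx))).continuousWithinAt) ?_
  rw [interior_Ioi, Real.deriv_rpow_const']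
  exact fun x hx y _ hxy =>
    mul_lt_mul_of_neg_left (Real.rpow_lt_rpow_of_neg hx hxy (by linarith)) hq

theorem strictConcaveOn_quadratic_sub_rpow_neg {p ν lam c : ℝ} (hp : 0 < p) (hlam : 0 ≤ lam) :
    StrictConcaveOn ℝ (Ioi 0) fun x : ℝ => c + ν * x - 2 * lam * x ^ 2 - p * x ^ (-p) := by
  have hquad : ConvexOn ℝ (Ioi 0) fun x : ℝ => (2 * lam) • x ^ 2 :=
    ((convexOn_pow 2).subset Ioi_subset_Ici_self (convex_Ioi 0)).smul (by positivity)
  have hlin : ConcaveOn ℝ (Ioi 0) fun x : ℝ => ν * x + c :=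
    ((LinearMap.mulLeft ℝ ν).concaveOn (convex_Ioi 0)).add_const c
  refine ((hlin.sub hquad).sub_strictConvexOn
    ((strictConvexOn_rpow_of_neg (neg_lt_zero.2 hp)).const_mul hp)).congr fun x _ => ?_
  simp only [Pi.sub_apply, smul_eq_mul]
  ring

theorem rpow_mul_quadratic_sub_rpow_neg {p ν lam c x : ℝ} (hx : 0 < x) :
    x ^ p * (c + ν * x - 2 * lam * x ^ 2 - p * x ^ (-p)) =
      -p + ν * x ^ (p + 1) - 2 * lam * x ^ (p + 2) + c * x ^ p := by
  rw [Real.rpow_add_one hx.ne', Real.rpow_add hx, Real.rpow_neg hx.le, Real.rpow_two]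
  field_simp
  ring

theorem stmt_11_general (p ν lam c : ℝ) (hp : 0 < p) (hlam : 0 ≤ lam) :
    {x : ℝ | 0 < x ∧
      -p + ν * x ^ (p + 1) - 2 * lam * x ^ (p + 2) + c * x ^ p = 0}.encard ≤ 2 := by
  have hg := strictConcaveOn_quadratic_sub_rpow_neg (c := c) (ν := ν) hp hlam
  convert hg.encard_setOf_eq_le_two 0 using 2
  ext x
  refine and_congr_right fun hx => ?_
  rw [← rpow_mul_quadratic_sub_rpow_neg hx, mul_eq_zero,
    or_iff_right (Real.rpow_pos_of_pos hx p).ne']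

theorem stmt_11 (p ν lam c : ℝ) (hp : 0 < p) (hlam : 0 ≤ lam) (hc : 0 ≤ c) :
    {x : ℝ | 0 < x ∧
      -p + ν * x ^ (p + 1) - 2 * lam * x ^ (p + 2) + c * x ^ p = 0}.encard ≤ 2 :=
  stmt_11_general p ν lam c hp hlam
end

section
/- Let n ≥ 2 and let e_1 ≤ e_2 ≤ ⋯ ≤ e_n be positive real numbers with e_1 < e_n. Then there exists a vector w = (w_1,…,w_n) of real numbers such that: (a) w_1 + ⋯ + w_n = 0; (b) e_1·w_1 + ⋯ + e_n·w_n > 0; (c) w_1/e_1 + ⋯ + w_n/e_n < 0; (d) w_1 < 0; (e) w_1 < w_i for every index i with 2 ≤ i ≤ n−1 and e_i = e_1; and (f) w_i < w_n for every index i with 2 ≤ i ≤ n−1 and e_i = e_n. -/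
/-!
Take `w = e - ē + δ_b - δ_a`, with `ē` the mean of `e`, `a` the first and `b` the last index.
The centred part `e - ē` has sum zero, hence `∑ eᵢ (eᵢ - ē) = ∑ (eᵢ - ē)² ≥ 0` and
`∑ (eᵢ - ē) / eᵢ = -∑ (eᵢ - ē)² / (eᵢ ē) ≤ 0`. Moving one unit from `a` to `b` adds
`e_b - e_a > 0` to the first sum and `1/e_b - 1/e_a < 0` to the second, which makes both strict;
the order conditions follow from `e_a ≤ ē`.
-/

open Finset
open scoped BigOperators

section Centred

variable {ι : Type*} [Fintype ι] (e : ι → ℝ)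

lemma sum_sub_expect_eq_zero : ∑ i, (e i - 𝔼 j, e j) = 0 := by
  rw [sum_sub_distrib, sum_const, card_smul_expect, sub_self]

lemma sum_mul_sub_expect_eq_sum_sq :
    ∑ i, e i * (e i - 𝔼 j, e j) = ∑ i, (e i - 𝔼 j, e j) ^ 2 := by
  calc ∑ i, e i * (e i - 𝔼 j, e j)
      = ∑ i, ((e i - 𝔼 j, e j) ^ 2 + (𝔼 j, e j) * (e i - 𝔼 j, e j)) :=
        sum_congr rfl fun i _ => by ring
    _ = ∑ i, (e i - 𝔼 j, e j) ^ 2 := by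
        rw [sum_add_distrib, ← mul_sum, sum_sub_expect_eq_zero, mul_zero, add_zero]

lemma sum_sub_expect_div_eq_neg_sum_sq [Nonempty ι] (he : ∀ i, 0 < e i) :
    ∑ i, (e i - 𝔼 j, e j) / e i = -∑ i, (e i - 𝔼 j, e j) ^ 2 / (e i * 𝔼 j, e j) := by
  have hm : 0 < 𝔼 j, e j := expect_pos (fun i _ => he i) univ_nonempty
  calc ∑ i, (e i - 𝔼 j, e j) / e i
      = ∑ i, ((e i - 𝔼 j, e j) / e i - (e i - 𝔼 j, e j) / 𝔼 j, e j) := by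
        rw [sum_sub_distrib, ← sum_div, sum_sub_expect_eq_zero, zero_div, sub_zero]
    _ = -∑ i, (e i - 𝔼 j, e j) ^ 2 / (e i * 𝔼 j, e j) := by
        rw [← sum_neg_distrib]
        refine sum_congr rfl fun i _ => ?_
        field_simp [(he i).ne', hm.ne']
        ring

lemma sum_sub_expect_div_nonpos [Nonempty ι] (he : ∀ i, 0 < e i) :
    ∑ i, (e i - 𝔼 j, e j) / e i ≤ 0 := by
  have hm : 0 < 𝔼 j, e j := expect_pos (fun i _ => he i) univ_nonempty
  rw [sum_sub_expect_div_eq_neg_sum_sq e he, neg_nonpos]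
  exact sum_nonneg fun i _ => div_nonneg (sq_nonneg _) (mul_pos (he i) hm).le

end Centred

section Direction

variable {ι : Type*} [Fintype ι] [DecidableEq ι]

lemma sum_mul_add_ite_sub_ite (f c : ι → ℝ) (a b : ι) :
    ∑ i, f i * (c i + (if i = b then 1 else 0) - (if i = a then 1 else 0)) =
      ∑ i, f i * c i + f b - f a := by
  simp only [mul_sub, mul_add, sum_add_distrib, sum_sub_distrib, mul_ite, mul_one, mul_zero,
    sum_ite_eq', mem_univ, if_true]

noncomputable def mfDirection (e : ι → ℝ) (a b : ι) (i : ι) : ℝ :=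
  e i - 𝔼 j, e j + (if i = b then 1 else 0) - (if i = a then 1 else 0)

variable (e : ι → ℝ) {a b : ι}

lemma mfDirection_apply_of_ne {i : ι} (ha : i ≠ a) (hb : i ≠ b) :
    mfDirection e a b i = e i - 𝔼 j, e j := by
  simp [mfDirection, ha, hb]

lemma mfDirection_apply_left (hab : a ≠ b) : mfDirection e a b a = e a - 𝔼 j, e j - 1 := by
  simp [mfDirection, hab]

lemma mfDirection_apply_right (hab : a ≠ b) : mfDirection e a b b = e b - 𝔼 j, e j + 1 := by
  simp [mfDirection, hab.symm]

lemma sum_mfDirection : ∑ i, mfDirection e a b i = 0 := by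
  have h := sum_mul_add_ite_sub_ite 1 (fun i => e i - 𝔼 j, e j) a b
  simp only [Pi.one_apply, one_mul] at h
  simp only [mfDirection, h, sum_sub_expect_eq_zero]
  ring

lemma sum_mul_mfDirection_pos (hab : e a < e b) : 0 < ∑ i, e i * mfDirection e a b i := by
  have h := sum_mul_add_ite_sub_ite e (fun i => e i - 𝔼 j, e j) a b
  simp only [mfDirection] at h ⊢
  rw [h, sum_mul_sub_expect_eq_sum_sq]
  linarith [sum_nonneg fun i (_ : i ∈ univ) => sq_nonneg (e i - 𝔼 j, e j)]

lemma sum_mfDirection_div_neg [Nonempty ι] (he : ∀ i, 0 < e i) (hab : e a < e b) :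
    ∑ i, mfDirection e a b i / e i < 0 := by
  have h := sum_mul_add_ite_sub_ite (fun i => (e i)⁻¹) (fun i => e i - 𝔼 j, e j) a b
  simp only [mfDirection, div_eq_inv_mul] at h ⊢
  rw [h]
  have hc := sum_sub_expect_div_nonpos e he
  simp only [div_eq_inv_mul] at hc
  linarith [inv_strictAnti₀ (he a) hab]

end Direction

theorem stmt_12 (n : ℕ) (hn : 2 ≤ n) (e : Fin n → ℝ)
    (hpos : ∀ i, 0 < e i) (hmono : Monotone e)
    (hne : e ⟨0, by omega⟩ < e ⟨n - 1, by omega⟩) :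
    ∃ w : Fin n → ℝ,
      (∑ i, w i = 0) ∧
      (0 < ∑ i, e i * w i) ∧
      (∑ i, w i / e i < 0) ∧
      (w ⟨0, by omega⟩ < 0) ∧
      (∀ i : Fin n, 1 ≤ (i : ℕ) → (i : ℕ) ≤ n - 2 →
        e i = e ⟨0, by omega⟩ → w ⟨0, by omega⟩ < w i) ∧
      (∀ i : Fin n, 1 ≤ (i : ℕ) → (i : ℕ) ≤ n - 2 →
        e i = e ⟨n - 1, by omega⟩ → w i < w ⟨n - 1, by omega⟩) := by
  set a : Fin n := ⟨0, by omega⟩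
  set b : Fin n := ⟨n - 1, by omega⟩
  have : Nonempty (Fin n) := ⟨a⟩
  have hab : a ≠ b := Fin.ne_of_val_ne (by simp [a, b]; omega)
  have ha_le_mean : e a ≤ 𝔼 j, e j :=
    le_expect univ_nonempty fun i _ => hmono (Fin.le_def.mpr (Nat.zero_le _))
  have h_mid {i : Fin n} (h1 : 1 ≤ (i : ℕ)) (h2 : (i : ℕ) ≤ n - 2) :
      mfDirection e a b i = e i - 𝔼 j, e j :=
    mfDirection_apply_of_ne e (Fin.ne_of_val_ne (by simp [a]; omega))
      (Fin.ne_of_val_ne (by simp [b]; omega))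
  refine ⟨mfDirection e a b, sum_mfDirection e, sum_mul_mfDirection_pos e hne,
    sum_mfDirection_div_neg e hpos hne, ?_, ?_, ?_⟩
  · linarith [mfDirection_apply_left e hab]
  · intro i h1 h2 hei
    linarith [mfDirection_apply_left e hab, h_mid h1 h2]
  · intro i h1 h2 hei
    linarith [mfDirection_apply_right e hab, h_mid h1 h2]
end
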